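/- Let E be a finite-dimensional real inner product space, let f : E → ℝ be differentiable with L₁-Lipschitz gradient (L₁ > 0), let η > 0, σ² ≥ 0, and let N ≥ 1 be a natural number. On a probability space (Ω, 𝒜, μ) with a filtration ℱ₀ ⊆ ℱ₁ ⊆ ⋯ ⊆ 𝒜, let g₀, …, g_{N-1} : Ω → E be square-integrable random vectors with gₑ measurable with respect to ℱ_{e+1}, and define the iterates w₀ ∈ E (deterministic), w_{e+1} = w_e - η • g_e. Assume for each e that, almost everywhere, the conditional expectation of g_e given ℱ_e equals ∇f(w_e) and the conditional expectation of ‖g_e - ∇f(w_e)‖² given ℱ_e is at most σ². Then ∫ f(w_N) dμ ≤ f(w₀) - (η - η²L₁/2)·Σ_{e=0}^{N-1} ∫ ‖∇f(w_e)‖² dμ + (N·η²·L₁/2)·σ². -/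

import Mathlib

/-!
Integrating the descent lemma `f (x - η • g) ≤ f x - η ⟪∇f x, g⟫ + η² L / 2 ‖g‖²` along one SGD
step leaves two expectations. Since `w e` is `ℱ e`-measurable, the pull-out property of the
conditional expectation gives `𝔼 ⟪∇f (w e), g e⟫ = 𝔼 ‖∇f (w e)‖²`, and the same orthogonality
splits `𝔼 ‖g e‖² = 𝔼 ‖g e - ∇f (w e)‖² + 𝔼 ‖∇f (w e)‖² ≤ σ² + 𝔼 ‖∇f (w e)‖²`. The resulting
one-step bounds telescope over `e < N`.
-/

open MeasureTheory
open scoped RealInnerProductSpace NNReal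
section Smooth

variable {E : Type*} [NormedAddCommGroup E] [InnerProductSpace ℝ E] [CompleteSpace E]
  {f : E → ℝ} {K : ℝ≥0}

theorem abs_sub_sub_inner_gradient_le (hf : Differentiable ℝ f)
    (hlip : LipschitzWith K (gradient f)) (x y : E) :
    |f y - f x - ⟪gradient f x, y - x⟫| ≤ K / 2 * ‖y - x‖ ^ 2 := by
  set v := y - x
  set φ : ℝ → ℝ := fun t => f (x + t • v) - f x - t * ⟪gradient f x, v⟫
  have hφ : ∀ t, HasDerivAt φ ⟪gradient f (x + t • v) - gradient f x, v⟫ t := by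
    intro t
    have hline : HasDerivAt (fun s : ℝ => x + s • v) v t := by
      simpa using ((hasDerivAt_id t).smul_const v).const_add x
    have hcomp := (hf (x + t • v)).hasGradientAt.hasFDerivAt.comp_hasDerivAt t hline
    rw [inner_sub_left]
    refine (hcomp.sub_const (f x)).sub ?_
    simpa using (hasDerivAt_id t).mul_const ⟪gradient f x, v⟫
  have hbound : ∀ t ∈ Set.Ico (0 : ℝ) 1,
      ‖⟪gradient f (x + t • v) - gradient f x, v⟫‖ ≤ K * t * ‖v‖ ^ 2 := by
    rintro t ⟨ht, -⟩
    calc ‖⟪gradient f (x + t • v) - gradient f x, v⟫‖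
        ≤ ‖gradient f (x + t • v) - gradient f x‖ * ‖v‖ := norm_inner_le_norm _ _
      _ ≤ K * ‖x + t • v - x‖ * ‖v‖ := by gcongr; exact hlip.norm_sub_le _ _
      _ = K * t * ‖v‖ ^ 2 := by
        rw [add_sub_cancel_left, norm_smul, Real.norm_of_nonneg ht]
        ring
  have hB : ∀ t, HasDerivAt (fun s : ℝ => K / 2 * s ^ 2 * ‖v‖ ^ 2) (K * t * ‖v‖ ^ 2) t := by
    intro t
    refine (((hasDerivAt_pow 2 t).const_mul (K / 2 : ℝ)).mul_const (‖v‖ ^ 2)).congr_deriv ?_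
    push_cast
    ring
  -- fence `‖φ‖` on `[0, 1]` by `K t² ‖v‖² / 2`, whose derivative dominates `‖φ'‖`
  have h := image_norm_le_of_norm_deriv_right_le_deriv_boundary
    (fun t _ => (hφ t).continuousAt.continuousWithinAt) (fun t _ => (hφ t).hasDerivWithinAt)
    (by simp [φ]) hB hbound (Set.right_mem_Icc.2 zero_le_one)
  simpa [φ, v] using h

theorem le_add_inner_gradient_add_sq (hf : Differentiable ℝ f)
    (hlip : LipschitzWith K (gradient f)) (x y : E) :
    f y ≤ f x + ⟪gradient f x, y - x⟫ + K / 2 * ‖y - x‖ ^ 2 := by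
  linarith [(abs_le.1 (abs_sub_sub_inner_gradient_le hf hlip x y)).2]

theorem abs_le_of_lipschitzWith_gradient (hf : Differentiable ℝ f)
    (hlip : LipschitzWith K (gradient f)) (x : E) :
    |f x| ≤ |f 0| + ‖gradient f 0‖ * ‖x‖ + K / 2 * ‖x‖ ^ 2 := by
  have htaylor := abs_sub_sub_inner_gradient_le hf hlip 0 x
  have hinner := abs_real_inner_le_norm (gradient f 0) x
  rw [sub_zero] at htaylor
  calc |f x| = |f 0 + ⟪gradient f 0, x⟫ + (f x - f 0 - ⟪gradient f 0, x⟫)| := by congr 1; ring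
    _ ≤ |f 0| + |⟪gradient f 0, x⟫| + |f x - f 0 - ⟪gradient f 0, x⟫| := abs_add_three _ _ _
    _ ≤ _ := by gcongr

end Smooth

theorem LipschitzWith.comp_memLp_of_isFiniteMeasure {Ω F G : Type*} {m0 : MeasurableSpace Ω}
    {μ : Measure Ω} [IsFiniteMeasure μ] [NormedAddCommGroup F] [NormedAddCommGroup G]
    {K : ℝ≥0} {φ : F → G} {p : ENNReal} (hφ : LipschitzWith K φ) {X : Ω → F}
    (hX : MemLp X p μ) : MemLp (φ ∘ X) p μ := by
  have h := (hφ.sub (LipschitzWith.const (φ 0))).comp_memLp (by simp) hX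
  convert h.add (memLp_const (φ 0)) using 1
  ext
  simp

section Expectation

variable {E : Type*} [NormedAddCommGroup E] [InnerProductSpace ℝ E]
  {Ω : Type*} {m m0 : MeasurableSpace Ω} {μ : Measure Ω}

theorem MeasureTheory.MemLp.integrable_inner {X Y : Ω → E} (hX : MemLp X 2 μ) (hY : MemLp Y 2 μ) :
    Integrable (fun ω => ⟪X ω, Y ω⟫) μ :=
  memLp_one_iff_integrable.1 ((innerSL ℝ).memLp_of_bilin 1 hX hY)

theorem integral_inner_eq_integral_norm_sq_of_condExp_eq [CompleteSpace E] (hm : m ≤ m0)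
    [SigmaFinite (μ.trim hm)] {A G : Ω → E} (hA : StronglyMeasurable[m] A)
    (hAG : Integrable (fun ω => ⟪A ω, G ω⟫) μ) (hG : Integrable G μ) (hGA : μ[G | m] =ᵐ[μ] A) :
    ∫ ω, ⟪A ω, G ω⟫ ∂μ = ∫ ω, ‖A ω‖ ^ 2 ∂μ := by
  have hpull : μ[fun ω => ⟪A ω, G ω⟫ | m] =ᵐ[μ] fun ω => ⟪A ω, μ[G | m] ω⟫ :=
    condExp_bilin_of_stronglyMeasurable_left (innerSL ℝ) hA hAG hG
  rw [← integral_condExp hm]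
  refine integral_congr_ae (hpull.trans ?_)
  filter_upwards [hGA] with ω hω
  rw [hω, real_inner_self_eq_norm_sq]

theorem integral_norm_sq_eq_add_of_condExp_eq [CompleteSpace E] (hm : m ≤ m0) [IsFiniteMeasure μ]
    {A G : Ω → E} (hA : StronglyMeasurable[m] A) (hA2 : MemLp A 2 μ) (hG2 : MemLp G 2 μ)
    (hGA : μ[G | m] =ᵐ[μ] A) :
    ∫ ω, ‖G ω‖ ^ 2 ∂μ = ∫ ω, ‖G ω - A ω‖ ^ 2 ∂μ + ∫ ω, ‖A ω‖ ^ 2 ∂μ := by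
  have hAG := hA2.integrable_inner hG2
  have hinner := integral_inner_eq_integral_norm_sq_of_condExp_eq hm hA hAG
    (hG2.integrable one_le_two) hGA
  have hG2' := hG2.norm.integrable_sq
  have hA2' := hA2.norm.integrable_sq
  have hexpand : ∫ ω, ‖G ω - A ω‖ ^ 2 ∂μ
      = ∫ ω, ‖G ω‖ ^ 2 ∂μ - 2 * ∫ ω, ⟪A ω, G ω⟫ ∂μ + ∫ ω, ‖A ω‖ ^ 2 ∂μ := by
    simp_rw [norm_sub_sq_real, real_inner_comm (A _)]
    have hfirst : Integrable (fun ω => ‖G ω‖ ^ 2 - 2 * ⟪A ω, G ω⟫) μ := hG2'.sub (hAG.const_mul 2)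
    rw [integral_add hfirst hA2', integral_sub hG2' (hAG.const_mul 2), integral_const_mul]
  linarith

theorem integral_le_of_ae_condExp_le (hm : m ≤ m0) [IsProbabilityMeasure μ] {h : Ω → ℝ} {c : ℝ}
    (hc : ∀ᵐ ω ∂μ, μ[h | m] ω ≤ c) : ∫ ω, h ω ∂μ ≤ c := by
  rw [← integral_condExp hm]
  simpa using integral_mono_ae integrable_condExp (integrable_const c) hc

end Expectation

section Descent

variable {E : Type*} [NormedAddCommGroup E] [InnerProductSpace ℝ E] [CompleteSpace E]
  {f : E → ℝ} {K : ℝ≥0} {Ω : Type*} {m m0 : MeasurableSpace Ω} {μ : Measure Ω}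
  [IsFiniteMeasure μ]

theorem integrable_comp_of_lipschitzWith_gradient (hf : Differentiable ℝ f)
    (hlip : LipschitzWith K (gradient f)) {X : Ω → E} (hX : MemLp X 2 μ) :
    Integrable (fun ω => f (X ω)) μ := by
  refine Integrable.mono' ?_ (hf.continuous.comp_aestronglyMeasurable hX.1)
    (ae_of_all _ fun ω => (Real.norm_eq_abs _).trans_le
      (abs_le_of_lipschitzWith_gradient hf hlip (X ω)))
  exact ((integrable_const _).add ((hX.integrable one_le_two).norm.const_mul _)).add
    (hX.norm.integrable_sq.const_mul _)

theorem integral_comp_sub_smul_le (hm : m ≤ m0) (hf : Differentiable ℝ f)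
    (hlip : LipschitzWith K (gradient f)) {X G : Ω → E} (hX : StronglyMeasurable[m] X)
    (hX2 : MemLp X 2 μ) (hG2 : MemLp G 2 μ) (hGX : μ[G | m] =ᵐ[μ] fun ω => gradient f (X ω))
    {σ2 : ℝ} (hvar : ∫ ω, ‖G ω - gradient f (X ω)‖ ^ 2 ∂μ ≤ σ2) (η : ℝ) :
    ∫ ω, f (X ω - η • G ω) ∂μ
      ≤ ∫ ω, f (X ω) ∂μ - (η - η ^ 2 * K / 2) * ∫ ω, ‖gradient f (X ω)‖ ^ 2 ∂μ
        + η ^ 2 * K / 2 * σ2 := by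
  set A := fun ω => gradient f (X ω)
  have hA : StronglyMeasurable[m] A := hlip.continuous.comp_stronglyMeasurable hX
  have hA2 : MemLp A 2 μ := hlip.comp_memLp_of_isFiniteMeasure hX2
  have hfX := integrable_comp_of_lipschitzWith_gradient hf hlip hX2
  have hηAG := (hA2.integrable_inner hG2).const_mul η
  have hGsq := hG2.norm.integrable_sq.const_mul (η ^ 2 * K / 2)
  have hpt : ∀ ω, f (X ω - η • G ω)
      ≤ f (X ω) - η * ⟪A ω, G ω⟫ + η ^ 2 * K / 2 * ‖G ω‖ ^ 2 := by
    intro ω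
    have h := le_add_inner_gradient_add_sq hf hlip (X ω) (X ω - η • G ω)
    rw [sub_sub_cancel_left, inner_neg_right, real_inner_smul_right, norm_neg, norm_smul,
      mul_pow, Real.norm_eq_abs, sq_abs] at h
    linarith
  have hfirst : Integrable (fun ω => f (X ω) - η * ⟪A ω, G ω⟫) μ := hfX.sub hηAG
  have hnext := integrable_comp_of_lipschitzWith_gradient hf hlip (hX2.sub (hG2.const_smul η))
  have hcoef : 0 ≤ η ^ 2 * K / 2 := by positivity
  calc ∫ ω, f (X ω - η • G ω) ∂μ
      ≤ ∫ ω, (f (X ω) - η * ⟪A ω, G ω⟫ + η ^ 2 * K / 2 * ‖G ω‖ ^ 2) ∂μ :=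
        integral_mono hnext (hfirst.add hGsq) hpt
    _ = ∫ ω, f (X ω) ∂μ - η * ∫ ω, ⟪A ω, G ω⟫ ∂μ + η ^ 2 * K / 2 * ∫ ω, ‖G ω‖ ^ 2 ∂μ := by
        rw [integral_add hfirst hGsq, integral_sub hfX hηAG, integral_const_mul,
          integral_const_mul]
    _ = ∫ ω, f (X ω) ∂μ - η * ∫ ω, ‖A ω‖ ^ 2 ∂μ
          + η ^ 2 * K / 2 * (∫ ω, ‖G ω - A ω‖ ^ 2 ∂μ + ∫ ω, ‖A ω‖ ^ 2 ∂μ) := by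
        rw [integral_inner_eq_integral_norm_sq_of_condExp_eq hm hA (hA2.integrable_inner hG2)
          (hG2.integrable one_le_two) hGX, integral_norm_sq_eq_add_of_condExp_eq hm hA hA2 hG2 hGX]
    _ ≤ _ := by linarith [mul_le_mul_of_nonneg_left hvar hcoef]

end Descent

theorem multi_step_expected_descent_general
    {E : Type*} [NormedAddCommGroup E] [InnerProductSpace ℝ E]
    [FiniteDimensional ℝ E]
    (f : E → ℝ) (hf : Differentiable ℝ f)
    (L₁ : ℝ) (hL : 0 < L₁)
    (hlip : ∀ x y : E, ‖gradient f x - gradient f y‖ ≤ L₁ * ‖x - y‖)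
    (η : ℝ) (σ2 : ℝ)
    (N : ℕ)
    {Ω : Type*} {m0 : MeasurableSpace Ω} (μ : Measure Ω) [IsProbabilityMeasure μ]
    (ℱ : Filtration ℕ m0)
    (g : ℕ → Ω → E)
    (hgmeas : ∀ e, StronglyMeasurable[ℱ (e + 1)] (g e))
    (hg2 : ∀ e, MemLp (g e) 2 μ)
    (w₀ : E) (w : ℕ → Ω → E)
    (hw0 : ∀ ω, w 0 ω = w₀)
    (hw : ∀ e ω, w (e + 1) ω = w e ω - η • g e ω)
    (hunb : ∀ e, μ[g e | ℱ e] =ᵐ[μ] fun ω => gradient f (w e ω))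
    (hvar : ∀ e, ∀ᵐ ω ∂μ,
      (μ[fun ω' => ‖g e ω' - gradient f (w e ω')‖ ^ 2 | ℱ e]) ω ≤ σ2) :
    ∫ ω, f (w N ω) ∂μ
      ≤ f w₀
        - (η - η ^ 2 * L₁ / 2) * ∑ e ∈ Finset.range N, ∫ ω, ‖gradient f (w e ω)‖ ^ 2 ∂μ
        + ((N : ℝ) * η ^ 2 * L₁ / 2) * σ2 := by
  have hK : (L₁.toNNReal : ℝ) = L₁ := Real.coe_toNNReal _ hL.le
  have hlipK : LipschitzWith L₁.toNNReal (gradient f) :=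
    LipschitzWith.of_dist_le_mul fun x y => by
      rw [dist_eq_norm, dist_eq_norm, hK]; exact hlip x y
  have hw_zero : w 0 = fun _ => w₀ := funext hw0
  have hw_succ : ∀ e, w (e + 1) = fun ω => w e ω - η • g e ω := fun e => funext (hw e)
  have hw_meas : ∀ e, StronglyMeasurable[ℱ e] (w e) := by
    intro e
    induction e with
    | zero => rw [hw_zero]; exact stronglyMeasurable_const
    | succ e ih => rw [hw_succ]; exact (ih.mono (ℱ.mono e.le_succ)).sub ((hgmeas e).const_smul η)
  have hw_memLp : ∀ e, MemLp (w e) 2 μ := by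
    intro e
    induction e with
    | zero => rw [hw_zero]; exact memLp_const w₀
    | succ e ih => rw [hw_succ]; exact ih.sub ((hg2 e).const_smul η)
  have hstep : ∀ e ∈ Finset.range N, ∫ ω, f (w (e + 1) ω) ∂μ - ∫ ω, f (w e ω) ∂μ
      ≤ -(η - η ^ 2 * L₁ / 2) * ∫ ω, ‖gradient f (w e ω)‖ ^ 2 ∂μ + η ^ 2 * L₁ / 2 * σ2 := by
    intro e _
    have h := integral_comp_sub_smul_le (ℱ.le e) hf hlipK (hw_meas e) (hw_memLp e) (hg2 e)
      (hunb e) (integral_le_of_ae_condExp_le (ℱ.le e) (hvar e)) η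
    rw [hK] at h
    simp only [hw]
    linarith
  have htele := Finset.sum_le_sum hstep
  rw [Finset.sum_range_sub (fun e => ∫ ω, f (w e ω) ∂μ), Finset.sum_add_distrib,
    ← Finset.mul_sum, Finset.sum_const, Finset.card_range, nsmul_eq_mul] at htele
  simp only [hw0, integral_const, probReal_univ, one_smul] at htele
  linarith

/-- Multi-iteration local-computation bound (formula (12) in the proof of Theorem 1
of the paper): running `N` local SGD iterations `w_{e+1} = w_e - η • g_e` on the
`L₁`-smooth loss `f`, with `g_e` an adapted, square-integrable stochastic gradient
whose conditional expectation given the past is `∇f(w_e)` and whose conditional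
variance is at most `σ²`, we get
`𝔼[f(w_N)] ≤ f(w₀) - (η - η²L₁/2)·Σ_{e<N} 𝔼‖∇f(w_e)‖² + (Nη²L₁/2)σ²`. -/
theorem multi_step_expected_descent
    {E : Type*} [NormedAddCommGroup E] [InnerProductSpace ℝ E]
    [FiniteDimensional ℝ E]
    (f : E → ℝ) (hf : Differentiable ℝ f)
    (L₁ : ℝ) (hL : 0 < L₁)
    (hlip : ∀ x y : E, ‖gradient f x - gradient f y‖ ≤ L₁ * ‖x - y‖)
    (η : ℝ) (hη : 0 < η) (σ2 : ℝ) (hσ : 0 ≤ σ2)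
    (N : ℕ) (hN : 1 ≤ N)
    {Ω : Type*} {m0 : MeasurableSpace Ω} (μ : Measure Ω) [IsProbabilityMeasure μ]
    (ℱ : Filtration ℕ m0)
    (g : ℕ → Ω → E)
    (hgmeas : ∀ e, StronglyMeasurable[ℱ (e + 1)] (g e))
    (hg2 : ∀ e, MemLp (g e) 2 μ)
    (w₀ : E) (w : ℕ → Ω → E)
    (hw0 : ∀ ω, w 0 ω = w₀)
    (hw : ∀ e ω, w (e + 1) ω = w e ω - η • g e ω)
    (hunb : ∀ e, μ[g e | ℱ e] =ᵐ[μ] fun ω => gradient f (w e ω))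
    (hvar : ∀ e, ∀ᵐ ω ∂μ,
      (μ[fun ω' => ‖g e ω' - gradient f (w e ω')‖ ^ 2 | ℱ e]) ω ≤ σ2) :
    ∫ ω, f (w N ω) ∂μ
      ≤ f w₀
        - (η - η ^ 2 * L₁ / 2) * ∑ e ∈ Finset.range N, ∫ ω, ‖gradient f (w e ω)‖ ^ 2 ∂μ
        + ((N : ℝ) * η ^ 2 * L₁ / 2) * σ2 :=
  multi_step_expected_descent_general f hf L₁ hL hlip η σ2 N μ ℱ g hgmeas hg2 w₀ w hw0 hw hunb hvar
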